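/- Let G be a finite simple connected C-canonical graph of order n and diameter d with d ≡ 0 (mod 3) and m_G(−1) = n − d − 1, and let P = v_1 v_2 ⋯ v_{d+1} be a diameter path of G. Suppose u and v are vertices of G not on P such that u is adjacent to exactly v_{3a} and v_{3a+1} on P, and v is adjacent to exactly v_{3b+1} and v_{3b+2} on P. If b ≥ a, then u is adjacent to v and a = b; if b < a, then u is not adjacent to v. -/

import Mathlib

/-
Let `M = A + I`. The hypothesis on `m_G(-1)` says that `M` has rank `d + 1`. On the rows and
columns of the diameter path, `M` is the tridiagonal all-ones matrix of size `d + 1`, which is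
invertible since `3 ∤ d + 2`; so the `d + 1` path columns are a basis of the column space of `M`,
and every column of `M` is determined by its entries in the path rows. For the column of `u` the
coefficients are `1, 0, -1` repeated from index `3a + 1` on, and reading off the row of `w` gives
`M w u = c (3b + 1) + c (3b + 2) = [a ≤ b]`. If `u ~ w`, the walk `v (3a), u, w, v (3b + 2)` has
length 3, which forces `b = a`.
-/

attribute [local instance] Classical.propDecidable

/-- The multiplicity of `-1` as an eigenvalue of the adjacency matrix of `G`,
i.e. the dimension over `ℝ` of the kernel of `A + I`. -/
noncomputable def multNegOne {V : Type*} [Fintype V] (G : SimpleGraph V) : ℕ :=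
  Module.finrank ℝ (LinearMap.ker (Matrix.toLin' (G.adjMatrix ℝ + 1)))

/-- The set of indices `i ∈ {1, …, d+1}` such that `x` is adjacent to the vertex `v i`
of the diameter path `v 1, v 2, …, v (d+1)`. -/
noncomputable def pathNbrs {V : Type*} (G : SimpleGraph V) (d : ℕ) (v : ℕ → V) (x : V) :
    Finset ℕ :=
  (Finset.Icc 1 (d + 1)).filter fun i => G.Adj x (v i)

namespace Matrix

variable {m n ι K : Type*} [Field K] {M : Matrix m n K} {I : Finset ι} {q : ι → m}
  {p : ι → n} (hker : ∀ c : ι → K, (∀ j ∈ I, ∑ i ∈ I, M (q j) (p i) * c i = 0) →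
    ∀ i ∈ I, c i = 0)
include hker

theorem linearIndependent_col_of_submatrix_ker :
    LinearIndependent K (fun i : I => M.col (p i)) := by
  rw [Fintype.linearIndependent_iff]
  intro g hg i
  set c : ι → K := fun k => if h : k ∈ I then g ⟨k, h⟩ else 0
  have hc : ∀ i : I, c i = g i := fun i => dif_pos i.2
  have := hker c (fun j _ => by
    rw [← Finset.sum_coe_sort]
    simpa [hc, mul_comm] using congrFun hg (q j)) i i.2
  rwa [hc] at this

theorem col_eq_sum_of_rank_le_card [Fintype n] (hrank : M.rank ≤ I.card) {x : n} {c : ι → K}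
    (hc : ∀ j ∈ I, ∑ i ∈ I, M (q j) (p i) * c i = M (q j) x) (y : m) :
    M y x = ∑ i ∈ I, M y (p i) * c i := by
  have : FiniteDimensional K (Submodule.span K (Set.range M.col)) :=
    FiniteDimensional.span_of_finite K (Set.finite_range _)
  have hspan : Submodule.span K (Set.range fun i : I => M.col (p i)) =
      Submodule.span K (Set.range M.col) := by
    refine Submodule.eq_of_le_of_finrank_le
      (Submodule.span_mono (Set.range_comp_subset_range _ _)) ?_
    rwa [← rank_eq_finrank_span_cols,
      finrank_span_eq_card (linearIndependent_col_of_submatrix_ker hker), Fintype.card_coe]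
  obtain ⟨e, he⟩ := (Submodule.mem_span_range_iff_exists_fun K).1
    (hspan ▸ Submodule.subset_span (Set.mem_range_self x))
  set e' : ι → K := fun k => if h : k ∈ I then e ⟨k, h⟩ else 0
  have he' : ∀ i : I, e' i = e i := fun i => dif_pos i.2
  have hcol : ∀ z, M z x = ∑ i ∈ I, M z (p i) * e' i := fun z => by
    rw [← Finset.sum_coe_sort]
    simpa [he', mul_comm] using (congrFun he z).symm
  have hdiff := hker (e' - c) fun j hj => by
    simp only [Pi.sub_apply, mul_sub, Finset.sum_sub_distrib, ← hcol, hc j hj, sub_self]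
  rw [hcol]
  exact Finset.sum_congr rfl fun i hi => by rw [sub_eq_zero.1 (hdiff i hi)]

end Matrix

-- The recurrence makes `c` 3-periodic on `[0, N + 1]`, and `c 0 = c (N + 1) = 0` then kills it
-- unless `3 ∣ N + 1`.
theorem eq_zero_of_add_add_eq_zero {R : Type*} [AddCommGroup R] {N : ℕ} (hN : N % 3 ≠ 2)
    {c : ℕ → R} (hsupp : ∀ k ∉ Finset.Icc 1 N, c k = 0)
    (hrec : ∀ j ∈ Finset.Icc 1 N, c (j - 1) + c j + c (j + 1) = 0) (k : ℕ) : c k = 0 := by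
  have hrec' : ∀ k, k + 1 ≤ N → c k + c (k + 1) + c (k + 2) = 0 := fun k hk => by
    simpa using hrec (k + 1) (Finset.mem_Icc.2 ⟨by omega, hk⟩)
  have hstep : ∀ k, k + 2 ≤ N → c (k + 3) = c k := fun k hk => by
    have h2 : c (k + 1) + c (k + 2) + c (k + 3) = 0 := by simpa using hrec' (k + 1) (by omega)
    calc c (k + 3)
        = (c (k + 1) + c (k + 2) + c (k + 3)) - (c k + c (k + 1) + c (k + 2)) + c k := by abel
      _ = c k := by rw [h2, hrec' k (by omega), sub_zero, zero_add]
  have hmod : ∀ k ≤ N + 1, c k = c (k % 3) := by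
    intro k
    induction k using Nat.strong_induction_on with
    | _ k ih =>
      intro hk
      by_cases h3 : k < 3
      · rw [Nat.mod_eq_of_lt h3]
      · obtain ⟨k, rfl⟩ : ∃ k', k = k' + 3 := ⟨k - 3, by omega⟩
        rw [hstep k (by omega), ih k (by omega) (by omega), Nat.add_mod_right]
  have h0 : c 0 = 0 := hsupp 0 (by simp)
  have hend : c ((N + 1) % 3) = 0 := (hmod (N + 1) le_rfl).symm.trans (hsupp _ (by simp))
  by_cases hk : k ∈ Finset.Icc 1 N
  · rw [Finset.mem_Icc] at hk
    have h012 := hrec' 0 (by omega)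
    have h12 : c 1 = 0 ∧ c 2 = 0 := by
      rcases (by omega : (N + 1) % 3 = 1 ∨ (N + 1) % 3 = 2) with h | h <;> rw [h] at hend
      · exact ⟨hend, by simpa [h0, hend] using h012⟩
      · exact ⟨by simpa [h0, hend] using h012, hend⟩
    rw [hmod k (by omega)]
    rcases (by omega : k % 3 = 0 ∨ k % 3 = 1 ∨ k % 3 = 2) with h | h | h <;> simp [h, h0, h12]
  · exact hsupp k hk

-- The coefficients of the column of a vertex adjacent to exactly `v (3a)`, `v (3a + 1)` of the
-- path, in terms of the path columns.
noncomputable def pathCoeff (a N i : ℕ) : ℝ :=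
  if 3 * a + 1 ≤ i ∧ i ≤ N then (if i % 3 = 1 then 1 else if i % 3 = 0 then -1 else 0) else 0

theorem pathCoeff_eq_zero_of_notMem (a N : ℕ) :
    ∀ k ∉ Finset.Icc 1 N, pathCoeff a N k = 0 := by
  intro k hk
  simp only [Finset.mem_Icc] at hk
  exact if_neg (by omega)

theorem pathCoeff_add_add {a N j : ℕ} (hN : N % 3 = 1) (hj : j ∈ Finset.Icc 1 N) :
    pathCoeff a N (j - 1) + pathCoeff a N j + pathCoeff a N (j + 1) =
      if j ∈ ({3 * a, 3 * a + 1} : Finset ℕ) then 1 else 0 := by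
  simp only [pathCoeff, Finset.mem_insert, Finset.mem_singleton, Finset.mem_Icc] at hj ⊢
  split_ifs <;> (try norm_num) <;> omega

theorem sum_pathCoeff {a b N : ℕ} (hb : 3 * b + 2 ≤ N) :
    ∑ i ∈ ({3 * b + 1, 3 * b + 2} : Finset ℕ), pathCoeff a N i =
      if a ≤ b then 1 else 0 := by
  rw [Finset.sum_pair (by omega)]
  simp only [pathCoeff]
  split_ifs <;> (try norm_num) <;> omega

namespace SimpleGraph

variable {V : Type*} {G : SimpleGraph V}

theorem multNegOne_add_rank [Fintype V] (G : SimpleGraph V) :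
    multNegOne G + (G.adjMatrix ℝ + 1).rank = Fintype.card V := by
  rw [multNegOne, Matrix.rank, ← Matrix.toLin'_apply', add_comm,
    LinearMap.finrank_range_add_finrank_ker, Module.finrank_fintype_fun_eq_card]

theorem adjMatrix_add_one_apply {R : Type*} [NonAssocSemiring R] (x y : V) :
    (G.adjMatrix R + 1) x y = if x = y ∨ G.Adj x y then 1 else 0 := by
  by_cases h : x = y
  · subst h; simp
  · simp [h]

theorem adjMatrix_add_one_apply_of_ne {R : Type*} [NonAssocSemiring R] {x y : V} (h : x ≠ y) :
    (G.adjMatrix R + 1) x y = if G.Adj x y then 1 else 0 := by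
  simp [h]

theorem adjMatrix_add_one_comm {R : Type*} [NonAssocSemiring R] (x y : V) :
    (G.adjMatrix R + 1) x y = (G.adjMatrix R + 1) y x := by
  simp only [adjMatrix_add_one_apply, eq_comm, G.adj_comm]

section Path

variable {N : ℕ} {v : ℕ → V}
  (hpath : ∀ i ∈ Finset.Icc 1 N, ∀ j ∈ Finset.Icc 1 N,
    G.dist (v i) (v j) = max i j - min i j)
include hpath

theorem eq_or_adj_path_iff {i j : ℕ} (hi : i ∈ Finset.Icc 1 N) (hj : j ∈ Finset.Icc 1 N) :
    v j = v i ∨ G.Adj (v j) (v i) ↔ i ∈ ({j - 1, j, j + 1} : Finset ℕ) := by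
  have h := hpath j hj i hi
  simp only [Finset.mem_insert, Finset.mem_singleton, Finset.mem_Icc] at hi hj ⊢
  constructor
  · rintro (heq | hadj)
    · rw [heq, dist_self] at h; omega
    · rw [dist_eq_one_iff_adj.2 hadj] at h; omega
  · intro hij
    by_cases hji : i = j
    · exact .inl (congrArg v hji.symm)
    · exact .inr (dist_eq_one_iff_adj.1 (by omega))

theorem sum_adjMatrix_add_one_path_mul {R : Type*} [NonAssocSemiring R] {c : ℕ → R}
    (hsupp : ∀ k ∉ Finset.Icc 1 N, c k = 0) {j : ℕ} (hj : j ∈ Finset.Icc 1 N) :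
    ∑ i ∈ Finset.Icc 1 N, (G.adjMatrix R + 1) (v j) (v i) * c i =
      c (j - 1) + c j + c (j + 1) := by
  have hj1 : 1 ≤ j := (Finset.mem_Icc.1 hj).1
  calc ∑ i ∈ Finset.Icc 1 N, (G.adjMatrix R + 1) (v j) (v i) * c i
      = ∑ i ∈ Finset.Icc 1 N, if i ∈ ({j - 1, j, j + 1} : Finset ℕ) then c i else 0 :=
        Finset.sum_congr rfl fun i hi => by
          rw [adjMatrix_add_one_apply, if_congr (eq_or_adj_path_iff hpath hi hj) rfl rfl,
            ite_mul, one_mul, zero_mul]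
    _ = ∑ i ∈ ({j - 1, j, j + 1} : Finset ℕ), c i := by
        rw [Finset.sum_ite_mem]
        exact Finset.sum_subset Finset.inter_subset_right fun k _ hk =>
          hsupp k fun hkI => hk (Finset.mem_inter.2 ⟨hkI, ‹_›⟩)
    _ = c (j - 1) + c j + c (j + 1) := by
        rw [Finset.sum_insert (by simp; omega), Finset.sum_pair (by omega), add_assoc]

end Path

section PathNbrs

variable {R : Type*} {d : ℕ} {v : ℕ → V} {x : V}

theorem pathNbrs_subset : pathNbrs G d v x ⊆ Finset.Icc 1 (d + 1) :=
  Finset.filter_subset _ _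

theorem adj_of_mem_pathNbrs {i : ℕ} (h : i ∈ pathNbrs G d v x) : G.Adj x (v i) :=
  (Finset.mem_filter.1 h).2

theorem adjMatrix_add_one_apply_of_notMem_path [NonAssocSemiring R]
    (hx : ∀ i ∈ Finset.Icc 1 (d + 1), x ≠ v i) {i : ℕ} (hi : i ∈ Finset.Icc 1 (d + 1)) :
    (G.adjMatrix R + 1) x (v i) = if i ∈ pathNbrs G d v x then 1 else 0 := by
  simp [pathNbrs, hx i hi, hi]

theorem sum_adjMatrix_add_one_mul_of_notMem_path [NonAssocSemiring R]
    (hx : ∀ i ∈ Finset.Icc 1 (d + 1), x ≠ v i) (c : ℕ → R) :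
    ∑ i ∈ Finset.Icc 1 (d + 1), (G.adjMatrix R + 1) x (v i) * c i =
      ∑ i ∈ pathNbrs G d v x, c i := by
  rw [Finset.sum_congr rfl fun i hi => by
    rw [adjMatrix_add_one_apply_of_notMem_path hx hi, ite_mul, one_mul, zero_mul],
    Finset.sum_ite_mem, Finset.inter_eq_right.2 pathNbrs_subset]

theorem adjMatrix_add_one_apply_eq_sum_pathNbrs [Field R] [Fintype V] (hd : (d + 1) % 3 ≠ 2)
    (hpath : ∀ i ∈ Finset.Icc 1 (d + 1), ∀ j ∈ Finset.Icc 1 (d + 1),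
      G.dist (v i) (v j) = max i j - min i j)
    (hrank : (G.adjMatrix R + 1).rank ≤ d + 1)
    (hx : ∀ i ∈ Finset.Icc 1 (d + 1), x ≠ v i) {y : V}
    (hy : ∀ i ∈ Finset.Icc 1 (d + 1), y ≠ v i)
    {c : ℕ → R} (hsupp : ∀ k ∉ Finset.Icc 1 (d + 1), c k = 0)
    (hc : ∀ j ∈ Finset.Icc 1 (d + 1),
      c (j - 1) + c j + c (j + 1) = if j ∈ pathNbrs G d v x then 1 else 0) :
    (G.adjMatrix R + 1) y x = ∑ i ∈ pathNbrs G d v y, c i := by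
  have hker (c : ℕ → R) (hc : ∀ j ∈ Finset.Icc 1 (d + 1),
      ∑ i ∈ Finset.Icc 1 (d + 1), (G.adjMatrix R + 1) (v j) (v i) * c i = 0) :
      ∀ i ∈ Finset.Icc 1 (d + 1), c i = 0 := by
    set c' : ℕ → R := fun k => if k ∈ Finset.Icc 1 (d + 1) then c k else 0
    have hc' : ∀ k ∈ Finset.Icc 1 (d + 1), c' k = c k := fun k hk => if_pos hk
    have hsupp' : ∀ k ∉ Finset.Icc 1 (d + 1), c' k = 0 := fun k hk => if_neg hk
    intro i hi
    rw [← hc' i hi]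
    refine eq_zero_of_add_add_eq_zero hd hsupp' (fun j hj => ?_) i
    rw [← sum_adjMatrix_add_one_path_mul hpath hsupp' hj, ← hc j hj]
    exact Finset.sum_congr rfl fun k hk => by rw [hc' k hk]
  rw [Matrix.col_eq_sum_of_rank_le_card hker (by simpa using hrank) (c := c) (fun j hj => by
      rw [sum_adjMatrix_add_one_path_mul hpath hsupp hj, hc j hj, adjMatrix_add_one_comm,
        adjMatrix_add_one_apply_of_notMem_path hx hj]),
    sum_adjMatrix_add_one_mul_of_notMem_path hy]

end PathNbrs

end SimpleGraph

theorem stmt_13_general {V : Type*} [Fintype V] (G : SimpleGraph V) (n d : ℕ)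
    (hcard : Fintype.card V = n)
    (hd3 : d % 3 = 0)
    (v : ℕ → V)
    (hpath : ∀ i ∈ Finset.Icc 1 (d + 1), ∀ j ∈ Finset.Icc 1 (d + 1),
      G.dist (v i) (v j) = max i j - min i j)
    (hmult : multNegOne G = n - d - 1)
    (u w : V) (huP : ∀ i ∈ Finset.Icc 1 (d + 1), u ≠ v i) (hwP : ∀ i ∈ Finset.Icc 1 (d + 1), w ≠ v i) (a b : ℕ)
    (hu : pathNbrs G d v u = {3 * a, 3 * a + 1})
    (hw : pathNbrs G d v w = {3 * b + 1, 3 * b + 2}) :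
    (a ≤ b → G.Adj u w ∧ a = b) ∧ (b < a → ¬ G.Adj u w) := by
  have hu₀ : 3 * a ∈ pathNbrs G d v u := by simp [hu]
  have hw₂ : 3 * b + 2 ∈ pathNbrs G d v w := by simp [hw]
  have hbounds := And.intro (G.pathNbrs_subset hu₀) (G.pathNbrs_subset hw₂)
  simp only [Finset.mem_Icc] at hbounds
  have hrank : (G.adjMatrix ℝ + 1).rank ≤ d + 1 := by
    have := G.multNegOne_add_rank
    omega
  have hwu : (G.adjMatrix ℝ + 1) w u = if a ≤ b then 1 else 0 := by
    rw [G.adjMatrix_add_one_apply_eq_sum_pathNbrs (by omega) hpath hrank huP hwP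
      (pathCoeff_eq_zero_of_notMem a (d + 1))
      (fun j hj => hu ▸ pathCoeff_add_add (by omega) hj), hw, sum_pathCoeff (by omega)]
  have hne : w ≠ u := by
    rintro rfl
    simp only [hu, Finset.mem_insert, Finset.mem_singleton] at hw₂
    omega
  have hadj : G.Adj u w ↔ a ≤ b := by
    rw [G.adjMatrix_add_one_apply_of_ne hne, G.adj_comm] at hwu
    by_cases hab : a ≤ b <;> by_cases h : G.Adj u w <;> simp [hab, h] at hwu ⊢
  refine ⟨fun hab => ⟨hadj.2 hab, ?_⟩, fun hba h => absurd (hadj.1 h) (by omega)⟩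
  have hwalk : G.dist (v (3 * a)) (v (3 * b + 2)) ≤ 3 :=
    SimpleGraph.dist_le (.cons (G.adj_of_mem_pathNbrs hu₀).symm <| .cons (hadj.2 hab) <|
      .cons (G.adj_of_mem_pathNbrs hw₂) .nil)
  rw [hpath _ (by simp; omega) _ (by simp; omega)] at hwalk
  omega

theorem stmt_13 {V : Type*} [Fintype V] (G : SimpleGraph V) (n d : ℕ)
    (hconn : G.Connected)
    (hcard : Fintype.card V = n)
    (hcanon : ∀ a b : V, (∀ z : V, (z = a ∨ G.Adj a z) ↔ (z = b ∨ G.Adj b z)) → a = b)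
    (hd3 : d % 3 = 0)
    (hdiam : ∀ a b : V, G.dist a b ≤ d)
    (v : ℕ → V)
    (hpath : ∀ i ∈ Finset.Icc 1 (d + 1), ∀ j ∈ Finset.Icc 1 (d + 1),
      G.dist (v i) (v j) = max i j - min i j)
    (hmult : multNegOne G = n - d - 1)
    (u w : V) (huP : ∀ i ∈ Finset.Icc 1 (d + 1), u ≠ v i) (hwP : ∀ i ∈ Finset.Icc 1 (d + 1), w ≠ v i) (a b : ℕ)
    (hu : pathNbrs G d v u = {3 * a, 3 * a + 1})
    (hw : pathNbrs G d v w = {3 * b + 1, 3 * b + 2}) :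
    (a ≤ b → G.Adj u w ∧ a = b) ∧ (b < a → ¬ G.Adj u w) :=
  stmt_13_general G n d hcard hd3 v hpath hmult u w huP hwP a b hu hw
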